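/- Suppose the polyhedron P with the given face-pairing satisfies the Tessellation Condition. Then φ : J → M is a local homeomorphism. -/

import Mathlib

open Metric Set

section
variable {M : Type*} [MetricSpace M] {ι : Type*}

/-- The group generated by the face-pairing isometries. -/
def pairGroup (I : ι → M ≃ᵢ M) : Subgroup (M ≃ᵢ M) :=
  Subgroup.closure (Set.range I)

/-- `G` carries the discrete topology. -/
instance pairGroup.topologicalSpace (I : ι → M ≃ᵢ M) : TopologicalSpace (pairGroup I) := ⊥

instance pairGroup.discreteTopology (I : ι → M ≃ᵢ M) : DiscreteTopology (pairGroup I) := ⟨rfl⟩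

/-- The basic relation on `G × P` generating the gluing equivalence. -/
def pairRel (P : Set M) (face : ι → Set M) (I : ι → M ≃ᵢ M) :
    pairGroup I × P → pairGroup I × P → Prop := fun p q =>
  ∃ s : ι, (p.2 : M) ∈ face s ∧ I s (p.2 : M) = (q.2 : M) ∧
    ((q.1 : M ≃ᵢ M))⁻¹ * (p.1 : M ≃ᵢ M) = I s

/-- The natural map `φ : J → M`, `φ [g, x] = g x`. -/
def pairPhi (P : Set M) (face : ι → Set M) (I : ι → M ≃ᵢ M) :
    Quot (pairRel P face I) → M :=
  Quot.lift (fun p => (p.1 : M ≃ᵢ M) (p.2 : M)) (by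
    rintro ⟨g, x⟩ ⟨h, y⟩ ⟨s, -, hIx, hgh⟩
    have hg : (g : M ≃ᵢ M) = (h : M ≃ᵢ M) * I s := by
      rw [← hgh, mul_inv_cancel_left]
    simp only [hg]
    simp [hIx])

/-- The fibre `π⁻¹ [1, x]`. -/
def fiberAt (P : Set M) (face : ι → Set M) (I : ι → M ≃ᵢ M) (x : P) :
    Set (pairGroup I × P) :=
  {p | Quot.mk (pairRel P face I) p = Quot.mk (pairRel P face I) (1, x)}

/-- The set `N_{x,δ} ⊆ G × P`. -/
def pairN (P : Set M) (face : ι → Set M) (I : ι → M ≃ᵢ M) (x : P) (δ : ℝ) :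
    Set (pairGroup I × P) :=
  {q | ∃ p ∈ fiberAt P face I x, q.1 = p.1 ∧ dist (q.2 : M) (p.2 : M) < δ}

/-- The set `W_{x,δ} = π (N_{x,δ}) ⊆ J`. -/
def pairW (P : Set M) (face : ι → Set M) (I : ι → M ≃ᵢ M) (x : P) (δ : ℝ) :
    Set (Quot (pairRel P face I)) :=
  Quot.mk (pairRel P face I) '' pairN P face I x δ

/-- The action of `h ∈ G` on `J`, `h • [g, x] = [h g, x]`. -/
def Jmul (P : Set M) (face : ι → Set M) (I : ι → M ≃ᵢ M) (h : pairGroup I) :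
    Quot (pairRel P face I) → Quot (pairRel P face I) :=
  Quot.map (fun p => (h * p.1, p.2)) (by
    rintro ⟨g, x⟩ ⟨g', y⟩ ⟨s, hx, hIx, hgg⟩
    exact ⟨s, hx, hIx, by rw [← hgg]; simp [mul_assoc]⟩)

/-- `[P] = {[1, x] : x ∈ P} ⊆ J`. -/
def PJ (P : Set M) (face : ι → Set M) (I : ι → M ≃ᵢ M) :
    Set (Quot (pairRel P face I)) :=
  Set.range fun x : P => Quot.mk (pairRel P face I) (1, x)

/-- `[P°] = {[1, x] : x ∈ P°} ⊆ J`. -/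
def PJint (P : Set M) (face : ι → Set M) (I : ι → M ≃ᵢ M) :
    Set (Quot (pairRel P face I)) :=
  {j | ∃ x : P, (x : M) ∈ interior P ∧ j = Quot.mk (pairRel P face I) (1, x)}

/-- `P` is a polyhedron with a face-pairing. -/
structure IsPolyhedron (P : Set M) (face : ι → Set M) (bar : ι → ι) (I : ι → M ≃ᵢ M) :
    Prop where
  closed : IsClosed P
  locPathConn : LocPathConnectedSpace P
  connected : IsConnected P
  int_nonempty : (interior P).Nonempty
  cl_int : P = closure (interior P)
  bdry_nonempty : (P \ interior P).Nonempty
  face_nonempty : ∀ s, (face s).Nonempty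
  face_union : (⋃ s, face s) = P \ interior P
  bar_invol : ∀ s, bar (bar s) = s
  I_face : ∀ s, I s '' face s = face (bar s)
  I_bar : ∀ s, I (bar s) = (I s)⁻¹

/-- The Tessellation Condition 2.1. -/
structure TessellationCondition (P : Set M) (face : ι → Set M) (I : ι → M ≃ᵢ M) :
    Prop where
  local_cond : ∀ x : P, ∃ δ₀ > 0, ∀ δ : ℝ, 0 < δ → δ ≤ δ₀ →
    Quot.mk (pairRel P face I) ⁻¹' pairW P face I x δ = pairN P face I x δ ∧
    pairPhi P face I '' pairW P face I x δ = ball (x : M) δ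
  global_cond : ∃ (N : Set M) (ε : ℝ) (f : P → ℝ), IsOpen N ∧ 0 < ε ∧
    thickening ε P ⊆ N ∧ (∀ x, 0 < f x) ∧
    Set.BijOn (pairPhi P face I) (⋃ x : P, pairW P face I x (f x)) N

end

section Aux

variable {M : Type*} [MetricSpace M] {ι : Type*}
  (P : Set M) (face : ι → Set M) (I : ι → M ≃ᵢ M)

lemma pairPhi_mk (g : pairGroup I) (x : P) :
    pairPhi P face I (Quot.mk (pairRel P face I) (g, x)) = (g : M ≃ᵢ M) (x : M) := rfl

lemma pairPhi_continuous : Continuous (pairPhi P face I) := by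
  apply continuous_quot_lift
  rw [continuous_iff_continuousAt]
  rintro ⟨g, x⟩
  have h2 : ContinuousAt (fun p : pairGroup I × P => (g : M ≃ᵢ M) (p.2 : M)) (g, x) :=
    ((g : M ≃ᵢ M).continuous.comp (continuous_subtype_val.comp continuous_snd)).continuousAt
  refine ContinuousAt.congr h2 ?_
  have hmem : (({g} : Set (pairGroup I)) ×ˢ (Set.univ : Set P)) ∈ nhds ((g, x) : pairGroup I × P) :=
    prod_mem_nhds ((isOpen_discrete _).mem_nhds rfl) Filter.univ_mem
  filter_upwards [hmem] with p hp
  obtain ⟨hp1, -⟩ := hp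
  rw [Set.mem_singleton_iff] at hp1
  rw [hp1]

lemma Jmul_mk (h g : pairGroup I) (x : P) :
    Jmul P face I h (Quot.mk (pairRel P face I) (g, x)) =
      Quot.mk (pairRel P face I) (h * g, x) := rfl

lemma Jmul_continuous (h : pairGroup I) : Continuous (Jmul P face I h) := by
  refine (isQuotientMap_quot_mk).continuous_iff.mpr ?_
  exact continuous_quot_mk.comp
    ((continuous_of_discreteTopology.comp continuous_fst).prodMk continuous_snd)

lemma Jmul_Jmul (h h' : pairGroup I) (j : Quot (pairRel P face I)) :
    Jmul P face I h (Jmul P face I h' j) = Jmul P face I (h * h') j := by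
  induction j using Quot.ind with
  | _ p =>
    obtain ⟨g, x⟩ := p
    rw [Jmul_mk, Jmul_mk, Jmul_mk, mul_assoc]

lemma Jmul_one (j : Quot (pairRel P face I)) : Jmul P face I 1 j = j := by
  induction j using Quot.ind with
  | _ p =>
    obtain ⟨g, x⟩ := p
    rw [Jmul_mk, one_mul]

lemma Jmul_image (h : pairGroup I) (S : Set (Quot (pairRel P face I))) :
    Jmul P face I h '' S = Jmul P face I h⁻¹ ⁻¹' S := by
  ext j
  constructor
  · rintro ⟨a, ha, rfl⟩
    show Jmul P face I h⁻¹ (Jmul P face I h a) ∈ S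
    rwa [Jmul_Jmul, inv_mul_cancel, Jmul_one]
  · intro hj
    exact ⟨Jmul P face I h⁻¹ j, hj, by rw [Jmul_Jmul, mul_inv_cancel, Jmul_one]⟩

lemma pairPhi_Jmul (h : pairGroup I) (j : Quot (pairRel P face I)) :
    pairPhi P face I (Jmul P face I h j) = (h : M ≃ᵢ M) (pairPhi P face I j) := by
  induction j using Quot.ind with
  | _ p =>
    obtain ⟨g, x⟩ := p
    rw [Jmul_mk, pairPhi_mk, pairPhi_mk]
    simp

lemma mem_fiberAt_self (x : P) : ((1 : pairGroup I), x) ∈ fiberAt P face I x := rfl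

lemma mem_pairN_self (x : P) {δ : ℝ} (hδ : 0 < δ) :
    ((1 : pairGroup I), x) ∈ pairN P face I x δ :=
  ⟨(1, x), mem_fiberAt_self P face I x, rfl, by simpa using hδ⟩

lemma pairN_mono (x : P) {δ δ' : ℝ} (h : δ ≤ δ') :
    pairN P face I x δ ⊆ pairN P face I x δ' := by
  rintro q ⟨p, hp, h1, h2⟩
  exact ⟨p, hp, h1, h2.trans_le h⟩

lemma pairW_mono (x : P) {δ δ' : ℝ} (h : δ ≤ δ') :
    pairW P face I x δ ⊆ pairW P face I x δ' :=
  Set.image_mono (pairN_mono P face I x h)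

lemma pairN_isOpen (x : P) (δ : ℝ) : IsOpen (pairN P face I x δ) := by
  have : pairN P face I x δ =
      ⋃ p ∈ fiberAt P face I x,
        (Prod.fst ⁻¹' {p.1}) ∩ ((fun q : pairGroup I × P => dist (q.2 : M) (p.2 : M)) ⁻¹' Set.Iio δ) := by
    ext q
    simp only [pairN, Set.mem_setOf_eq, Set.mem_iUnion, Set.mem_inter_iff, Set.mem_preimage,
      Set.mem_singleton_iff, Set.mem_Iio]
    tauto
  rw [this]
  refine isOpen_biUnion fun p _ => IsOpen.inter ?_ ?_
  · exact (isOpen_discrete _).preimage continuous_fst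
  · exact isOpen_Iio.preimage
      (((continuous_subtype_val.comp continuous_snd).dist continuous_const))

/-- Key neighbourhood lemma: any open set containing `[g, y]` contains `g • W_{y,δ}`
for some small `δ ≤ δ₀`. -/
lemma exists_delta_subset (hfin : ∀ x : P, (fiberAt P face I x).Finite)
    {V : Set (Quot (pairRel P face I))} (hV : IsOpen V) (g : pairGroup I) (y : P)
    (hmem : Quot.mk (pairRel P face I) (g, y) ∈ V) (δ₀ : ℝ) (hδ₀ : 0 < δ₀) :
    ∃ δ : ℝ, 0 < δ ∧ δ ≤ δ₀ ∧ Jmul P face I g '' pairW P face I y δ ⊆ V := by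
  classical
  set V' : Set (Quot (pairRel P face I)) := Jmul P face I g ⁻¹' V with hV'def
  have hV'open : IsOpen V' := hV.preimage (Jmul_continuous P face I g)
  have h1yV' : Quot.mk (pairRel P face I) (1, y) ∈ V' := by
    show Jmul P face I g (Quot.mk (pairRel P face I) (1, y)) ∈ V
    rwa [Jmul_mk, mul_one]
  have hpre : IsOpen (Quot.mk (pairRel P face I) ⁻¹' V') :=
    hV'open.preimage continuous_quot_mk
  have h1 : ∀ p : pairGroup I × P, ∃ rp : ℝ, 0 < rp ∧
      (p ∈ fiberAt P face I y → ∀ q : pairGroup I × P, q.1 = p.1 →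
        dist (q.2 : M) (p.2 : M) < rp → Quot.mk (pairRel P face I) q ∈ V') := by
    intro p
    by_cases hp : p ∈ fiberAt P face I y
    · have hpV' : (p.1, p.2) ∈ Quot.mk (pairRel P face I) ⁻¹' V' := by
        show Quot.mk (pairRel P face I) (p.1, p.2) ∈ V'
        rw [Prod.mk.eta]
        show Quot.mk (pairRel P face I) p ∈ V'
        rw [show Quot.mk (pairRel P face I) p = Quot.mk (pairRel P face I) (1, y) from hp]
        exact h1yV'
      obtain ⟨u, v, hu, hv, hp1, hp2, huv⟩ := isOpen_prod_iff.mp hpre p.1 p.2 hpV'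
      obtain ⟨r, hr, hball⟩ := Metric.isOpen_iff.mp hv p.2 hp2
      refine ⟨r, hr, fun _ q hq1 hq2 => ?_⟩
      have hq2' : q.2 ∈ v := by
        apply hball
        rw [Metric.mem_ball, Subtype.dist_eq]
        exact hq2
      have : (q.1, q.2) ∈ u ×ˢ v := ⟨by rw [hq1]; exact hp1, hq2'⟩
      have := huv this
      rwa [Set.mem_preimage, Prod.mk.eta] at this
    · exact ⟨1, one_pos, fun h => absurd h hp⟩
  choose r hrpos hr using h1
  have hne : ((hfin y).toFinset).Nonempty :=
    ⟨(1, y), (hfin y).mem_toFinset.mpr (mem_fiberAt_self P face I y)⟩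
  set δ₁ : ℝ := ((hfin y).toFinset).inf' hne r with hδ₁def
  have hδ₁pos : 0 < δ₁ := by
    rw [hδ₁def, Finset.lt_inf'_iff]
    exact fun p _ => hrpos p
  refine ⟨min δ₀ δ₁, lt_min hδ₀ hδ₁pos, min_le_left _ _, ?_⟩
  have hNsub : pairN P face I y (min δ₀ δ₁) ⊆ Quot.mk (pairRel P face I) ⁻¹' V' := by
    rintro q ⟨p, hp, hq1, hq2⟩
    have hle : δ₁ ≤ r p := Finset.inf'_le r ((hfin y).mem_toFinset.mpr hp)
    exact hr p hp q hq1 (hq2.trans_le ((min_le_right _ _).trans hle))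
  rintro j ⟨w, hw, rfl⟩
  obtain ⟨q, hq, rfl⟩ := hw
  exact hNsub hq
  
lemma pairPhi_isOpenMap (htess : TessellationCondition P face I)
    (hfin : ∀ x : P, (fiberAt P face I x).Finite) :
    IsOpenMap (pairPhi P face I) := by
  intro V hV
  rw [Metric.isOpen_iff]
  rintro z ⟨j, hjV, rfl⟩
  obtain ⟨⟨g, y⟩, rfl⟩ := Quot.exists_rep j
  obtain ⟨δ₀, hδ₀, hloc⟩ := htess.local_cond y
  obtain ⟨δ, hδpos, hδle, hsub⟩ := exists_delta_subset P face I hfin hV g y hjV δ₀ hδ₀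
  refine ⟨δ, hδpos, ?_⟩
  have hW : pairPhi P face I '' pairW P face I y δ = Metric.ball (y : M) δ :=
    (hloc δ hδpos hδle).2
  have himg : pairPhi P face I '' (Jmul P face I g '' pairW P face I y δ) =
      (g : M ≃ᵢ M) '' Metric.ball (y : M) δ := by
    rw [← hW, ← Set.image_comp, ← Set.image_comp]
    exact Set.image_congr fun w _ => pairPhi_Jmul P face I g w
  rw [IsometryEquiv.image_ball] at himg
  rw [pairPhi_mk]
  rw [← himg]
  exact Set.image_mono hsub

lemma pairW_isOpen (htess : TessellationCondition P face I) (x : P) {δ δ₀ : ℝ}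
    (hδ : 0 < δ) (hδ₀ : δ ≤ δ₀)
    (hloc : ∀ δ : ℝ, 0 < δ → δ ≤ δ₀ →
      Quot.mk (pairRel P face I) ⁻¹' pairW P face I x δ = pairN P face I x δ ∧
      pairPhi P face I '' pairW P face I x δ = Metric.ball (x : M) δ) :
    IsOpen (pairW P face I x δ) := by
  rw [← isQuotientMap_quot_mk.isOpen_preimage, (hloc δ hδ hδ₀).1]
  exact pairN_isOpen P face I x δ

end Aux

/-- Suppose the polyhedron `P` with the given face-pairing satisfies the
Tessellation Condition.  Then `φ : J → M` is a local homeomorphism. -/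
theorem pairPhi_isLocalHomeomorph {M : Type*} [MetricSpace M] {ι : Type*}
    (P : Set M) (face : ι → Set M) (bar : ι → ι) (I : ι → M ≃ᵢ M)
    (hpoly : IsPolyhedron P face bar I)
    (hfin : ∀ x : P, (fiberAt P face I x).Finite)
    (htess : TessellationCondition P face I) :
    IsLocalHomeomorph (pairPhi P face I) := by
    classical
  rw [isLocalHomeomorph_iff_isOpenEmbedding_restrict]
  intro j
  obtain ⟨⟨g, x⟩, rfl⟩ := Quot.exists_rep j
  obtain ⟨N, ε, f, hNopen, hε, hthick, hfpos, hbij⟩ := htess.global_cond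
  obtain ⟨δ₀, hδ₀pos, hloc⟩ := htess.local_cond x
  set δ : ℝ := min δ₀ (f x) with hδdef
  have hδpos : 0 < δ := lt_min hδ₀pos (hfpos x)
  have hδle : δ ≤ δ₀ := min_le_left _ _
  have hopenmap : IsOpenMap (pairPhi P face I) := pairPhi_isOpenMap P face I htess hfin
  set U : Set (Quot (pairRel P face I)) := Jmul P face I g '' pairW P face I x δ with hUdef
  have hUopen : IsOpen U := by
    rw [hUdef, Jmul_image]
    exact (pairW_isOpen P face I htess x hδpos hδle hloc).preimage
      (Jmul_continuous P face I g⁻¹)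
  have hjU : Quot.mk (pairRel P face I) (g, x) ∈ U := by
    refine ⟨Quot.mk (pairRel P face I) (1, x), ?_, by rw [Jmul_mk, mul_one]⟩
    exact ⟨(1, x), mem_pairN_self P face I x hδpos, rfl⟩
  refine ⟨U, hUopen.mem_nhds hjU, ?_⟩
  have hinj : Set.InjOn (pairPhi P face I) U := by
    rintro a ⟨a', ha', rfl⟩ b ⟨b', hb', rfl⟩ hab
    rw [pairPhi_Jmul, pairPhi_Jmul] at hab
    have hab' : pairPhi P face I a' = pairPhi P face I b' :=
      (g : M ≃ᵢ M).injective hab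
    have hsub : pairW P face I x δ ⊆ ⋃ y : P, pairW P face I y (f y) :=
      (pairW_mono P face I x (min_le_right _ _)).trans (Set.subset_iUnion (fun y : P => pairW P face I y (f y)) x)
    rw [hbij.injOn (hsub ha') (hsub hb') hab']
  refine Topology.IsOpenEmbedding.of_continuous_injective_isOpenMap ?_ ?_ ?_
  · exact (pairPhi_continuous P face I).comp continuous_subtype_val
  · exact Set.injOn_iff_injective.mp hinj
  · intro s hs
    have : U.domRestrict (pairPhi P face I) '' s = pairPhi P face I '' (Subtype.val '' s) := by
      rw [Set.restrict_eq, Set.image_comp]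
    rw [this]
    exact hopenmap _ (hUopen.isOpenMap_subtype_val s hs)
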